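/- Let Ω₁,…,Ω_k with Ω_i ⊆ ℂ^{n_i} be bounded domains and let Ω = Ω₁ × Ω₂ × ⋯ × Ω_k ⊆ ℂⁿ, where n = n₁ + n₂ + ⋯ + n_k. Then for any a = (a₁, a₂, …, a_k) ∈ Ω with a_i ∈ Ω_i, one has S_Ω(a) ≥ [ (S_{Ω₁}(a₁))^{−2} + (S_{Ω₂}(a₂))^{−2} + ⋯ + (S_{Ω_k}(a_k))^{−2} ]^{−1/2}. -/

import Mathlib

open Metric Set Matrix
open scoped ComplexOrder

noncomputable section

/-- The open polydisk of radius `r` centered at the origin in `ℂ^ι`: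
`𝔻^ι(0,r) = { w : |wᵢ| < r for all i }`. -/
def polydisk (ι : Type*) [Fintype ι] (r : ℝ) : Set (EuclideanSpace ℂ ι) :=
  {w | ∀ i, ‖w i‖ < r}

/-- The squeezing function corresponding to the polydisk:
`T_Ω(z) = sup { r > 0 : ∃ injective holomorphic f : Ω → 𝔻ⁿ, f z = 0, 𝔻ⁿ(0,r) ⊆ f(Ω) }`. -/
def squeezingT {ι : Type*} [Fintype ι] (Ω : Set (EuclideanSpace ℂ ι))
    (z : EuclideanSpace ℂ ι) : ℝ :=
  sSup {r : ℝ | 0 < r ∧ ∃ f : EuclideanSpace ℂ ι → EuclideanSpace ℂ ι,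
    DifferentiableOn ℂ f Ω ∧ Set.InjOn f Ω ∧ f '' Ω ⊆ polydisk ι 1 ∧
    f z = 0 ∧ polydisk ι r ⊆ f '' Ω}

/-- The squeezing function corresponding to the Euclidean unit ball:
`S_Ω(z) = sup { r > 0 : ∃ injective holomorphic f : Ω → Bⁿ, f z = 0, Bⁿ(0,r) ⊆ f(Ω) }`. -/
def squeezingS {ι : Type*} [Fintype ι] (Ω : Set (EuclideanSpace ℂ ι))
    (z : EuclideanSpace ℂ ι) : ℝ :=
  sSup {r : ℝ | 0 < r ∧ ∃ f : EuclideanSpace ℂ ι → EuclideanSpace ℂ ι,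
    DifferentiableOn ℂ f Ω ∧ Set.InjOn f Ω ∧ f '' Ω ⊆ ball (0 : EuclideanSpace ℂ ι) 1 ∧
    f z = 0 ∧ ball (0 : EuclideanSpace ℂ ι) r ⊆ f '' Ω}

/-- A bounded domain in `ℂ^ι`: a nonempty connected bounded open set. -/
def IsBoundedDomain {ι : Type*} [Fintype ι] (Ω : Set (EuclideanSpace ℂ ι)) : Prop :=
  IsOpen Ω ∧ IsConnected Ω ∧ Bornology.IsBounded Ω

/-- The `i`-th block of a vector in `ℂ^{n₁} × ⋯ × ℂ^{n_k}` viewed inside `ℂ^{n₁+⋯+n_k}`. -/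
def blockOf {k : ℕ} {n : Fin k → ℕ} (z : EuclideanSpace ℂ ((i : Fin k) × Fin (n i)))
    (i : Fin k) : EuclideanSpace ℂ (Fin (n i)) := WithLp.toLp 2 (fun j => z ⟨i, j⟩)

/-- The product `Ω₁ × ⋯ × Ω_k` viewed as a subset of `ℂ^{n₁+⋯+n_k}`. -/
def prodDomain {k : ℕ} {n : Fin k → ℕ} (Ω : ∀ i, Set (EuclideanSpace ℂ (Fin (n i)))) :
    Set (EuclideanSpace ℂ ((i : Fin k) × Fin (n i))) :=
  {z | ∀ i, blockOf z i ∈ Ω i}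

/-! Take squeezing maps `fᵢ` of `Ωᵢ` at `aᵢ` with `B(0, rᵢ) ⊆ fᵢ(Ωᵢ) ⊆ B(0, 1)` and put
`c = (∑ rᵢ⁻²)^(-1/2)`. The blockwise map `z ↦ ((c / rᵢ) fᵢ(zᵢ))ᵢ` is injective and holomorphic
on `Ω`, sends `a` to `0`, maps `Ω` into the unit ball because `∑ (c / rᵢ)² = 1`, and its image
contains `B(0, c)` because every block of a point of `B(0, c)` lies in
`B(0, c) = (c / rᵢ) • B(0, rᵢ)`. Hence `S_Ω(a) ≥ c`, and letting `rᵢ ↑ S_{Ωᵢ}(aᵢ)` gives the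
bound. -/

open Filter Topology
open scoped Pointwise

section Squeezing

variable {ι : Type*} [Fintype ι]

structure IsSqueezingMap (Ω : Set (EuclideanSpace ℂ ι)) (z : EuclideanSpace ℂ ι)
    (f : EuclideanSpace ℂ ι → EuclideanSpace ℂ ι) (r R : ℝ) : Prop where
  differentiableOn : DifferentiableOn ℂ f Ω
  injOn : InjOn f Ω
  image_subset_ball : f '' Ω ⊆ ball 0 R
  map_center : f z = 0
  ball_subset_image : ball 0 r ⊆ f '' Ω

def squeezingRadii (Ω : Set (EuclideanSpace ℂ ι)) (z : EuclideanSpace ℂ ι) : Set ℝ :=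
  {r | 0 < r ∧ ∃ f, IsSqueezingMap Ω z f r 1}

variable {Ω : Set (EuclideanSpace ℂ ι)} {z : EuclideanSpace ℂ ι}

theorem squeezingS_eq_sSup_squeezingRadii (Ω : Set (EuclideanSpace ℂ ι))
    (z : EuclideanSpace ℂ ι) : squeezingS Ω z = sSup (squeezingRadii Ω z) := by
  show sSup _ = sSup _
  congr 1
  ext r
  exact and_congr_right fun _ => exists_congr fun _ =>
    ⟨fun ⟨h₁, h₂, h₃, h₄, h₅⟩ => ⟨h₁, h₂, h₃, h₄, h₅⟩, fun ⟨h₁, h₂, h₃, h₄, h₅⟩ =>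
      ⟨h₁, h₂, h₃, h₄, h₅⟩⟩

theorem squeezingS_nonneg (Ω : Set (EuclideanSpace ℂ ι)) (z : EuclideanSpace ℂ ι) :
    0 ≤ squeezingS Ω z :=
  Real.sSup_nonneg fun _ hr => hr.1.le

theorem IsSqueezingMap.smul {f : EuclideanSpace ℂ ι → EuclideanSpace ℂ ι} {r R s : ℝ}
    (hf : IsSqueezingMap Ω z f r R) (hs : 0 < s) :
    IsSqueezingMap Ω z ((s : ℂ) • f) (s * r) (s * R) := by
  have hs' : (s : ℂ) ≠ 0 := Complex.ofReal_ne_zero.2 hs.ne'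
  have smul_ball_zero : ∀ ρ, (s : ℂ) • ball (0 : EuclideanSpace ℂ ι) ρ = ball 0 (s * ρ) := by
    intro ρ
    rw [_root_.smul_ball hs', smul_zero, Complex.norm_real, Real.norm_of_nonneg hs.le]
  have image_eq : ((s : ℂ) • f) '' Ω = (s : ℂ) • (f '' Ω) := by
    rw [← image_smul, image_image]
    rfl
  refine ⟨hf.differentiableOn.const_smul (s : ℂ), ?_, ?_, ?_, ?_⟩
  · exact (smul_right_injective _ hs').comp_injOn hf.injOn
  · rw [image_eq, ← smul_ball_zero]
    exact smul_set_mono hf.image_subset_ball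
  · simp [hf.map_center]
  · rw [image_eq, ← smul_ball_zero]
    exact smul_set_mono hf.ball_subset_image

theorem isSqueezingMap_sub_center {δ R : ℝ} (hδ : ball z δ ⊆ Ω) (hR : Ω ⊆ ball z R) :
    IsSqueezingMap Ω z (· - z) δ R where
  differentiableOn := differentiableOn_id.sub_const z
  injOn _ _ _ _ h := sub_left_inj.1 h
  image_subset_ball := by
    rintro _ ⟨x, hx, rfl⟩
    simpa [mem_ball, dist_eq_norm] using hR hx
  map_center := sub_self z
  ball_subset_image w hw :=
    ⟨w + z, hδ (by simpa [mem_ball, dist_eq_norm] using hw), add_sub_cancel_right w z⟩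

theorem squeezingRadii_nonempty (hΩ : IsOpen Ω) (hb : Bornology.IsBounded Ω) (hz : z ∈ Ω) :
    (squeezingRadii Ω z).Nonempty := by
  obtain ⟨δ, hδ, hδΩ⟩ := Metric.isOpen_iff.1 hΩ z hz
  obtain ⟨R, hR⟩ := hb.subset_ball z
  have hR0 : 0 < R := by simpa using hR hz
  refine ⟨R⁻¹ * δ, by positivity, ((R⁻¹ : ℝ) : ℂ) • (· - z), ?_⟩
  simpa [inv_mul_cancel₀ hR0.ne'] using (isSqueezingMap_sub_center hδΩ hR).smul (inv_pos.2 hR0)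

theorem le_one_of_mem_squeezingRadii [Nonempty ι] {r : ℝ} (hr : r ∈ squeezingRadii Ω z) :
    r ≤ 1 := by
  obtain ⟨-, f, hf⟩ := hr
  by_contra! h
  obtain ⟨x, hx⟩ := exists_norm_eq (EuclideanSpace ℂ ι) zero_le_one
  have := hf.image_subset_ball (hf.ball_subset_image (mem_ball_zero_iff.2 (hx ▸ h)))
  exact (mem_ball_zero_iff.1 this).ne hx

/-- In `ℂ⁰` every radius is admissible, so the supremum is the junk value `0`. -/
theorem squeezingS_of_isEmpty [IsEmpty ι] (hz : z ∈ Ω) : squeezingS Ω z = 0 := by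
  rw [squeezingS_eq_sSup_squeezingRadii]
  refine Real.sSup_of_not_bddAbove fun ⟨b, hb⟩ => ?_
  have hmem : max b 0 + 1 ∈ squeezingRadii Ω z := by
    refine ⟨by positivity, id, differentiableOn_id, injOn_id Ω, ?_, Subsingleton.elim _ _, ?_⟩
    · exact fun w _ => by simp [Subsingleton.elim w 0]
    · exact fun w _ => ⟨z, hz, Subsingleton.elim _ _⟩
  linarith [hb hmem, le_max_left b 0]

end Squeezing

/-- For unbounded `S` we have `sSup S = 0`, consistent with `1 / ∞ = 0`. -/
theorem exists_seq_mem_tendsto_inv_sSup {S : Set ℝ} (hne : S.Nonempty)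
    (hpos : ∀ x ∈ S, 0 < x) :
    ∃ u : ℕ → ℝ, (∀ m, u m ∈ S) ∧ Tendsto (fun m => (u m)⁻¹) atTop (𝓝 (sSup S)⁻¹) := by
  by_cases hS : BddAbove S
  · obtain ⟨u, -, hu, hmem⟩ := exists_seq_tendsto_sSup hne hS
    obtain ⟨x, hx⟩ := hne
    exact ⟨u, hmem, hu.inv₀ (hpos x hx |>.trans_le (le_csSup hS hx)).ne'⟩
  · choose u hmem hu using fun m : ℕ => not_bddAbove_iff.1 hS m
    rw [Real.sSup_of_not_bddAbove hS, _root_.inv_zero]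
    exact ⟨u, hmem, tendsto_inv_atTop_zero.comp
      (tendsto_atTop_mono (fun m => (hu m).le) tendsto_natCast_atTop_atTop)⟩

section Blocks

variable {k : ℕ} {n : Fin k → ℕ}

variable (n) in
def blockEquiv : EuclideanSpace ℂ ((i : Fin k) × Fin (n i)) ≃ₗᵢ[ℂ]
    PiLp 2 (fun i => EuclideanSpace ℂ (Fin (n i))) :=
  LinearIsometryEquiv.piLpCurry ℂ 2 (fun i (_ : Fin (n i)) => ℂ)

theorem blockEquiv_apply (z : EuclideanSpace ℂ ((i : Fin k) × Fin (n i))) (i : Fin k) :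
    blockEquiv n z i = blockOf z i :=
  rfl

theorem blockOf_blockEquiv_symm (x : PiLp 2 (fun i => EuclideanSpace ℂ (Fin (n i))))
    (i : Fin k) : blockOf ((blockEquiv n).symm x) i = x i := by
  rw [← blockEquiv_apply, LinearIsometryEquiv.apply_symm_apply]

theorem ext_blockOf {z w : EuclideanSpace ℂ ((i : Fin k) × Fin (n i))}
    (h : ∀ i, blockOf z i = blockOf w i) : z = w :=
  (blockEquiv n).injective (PiLp.ext h)

theorem norm_sq_eq_sum_norm_blockOf_sq (z : EuclideanSpace ℂ ((i : Fin k) × Fin (n i))) :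
    ‖z‖ ^ 2 = ∑ i, ‖blockOf z i‖ ^ 2 := by
  rw [← (blockEquiv n).norm_map, PiLp.norm_sq_eq_of_L2]
  rfl

theorem norm_blockOf_le (z : EuclideanSpace ℂ ((i : Fin k) × Fin (n i))) (i : Fin k) :
    ‖blockOf z i‖ ≤ ‖z‖ :=
  (blockEquiv n).norm_map z ▸ PiLp.norm_apply_le (blockEquiv n z) i

theorem differentiable_blockOf (i : Fin k) :
    Differentiable ℂ fun z : EuclideanSpace ℂ ((i : Fin k) × Fin (n i)) => blockOf z i :=
  differentiable_euclidean.2 fun j =>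
    (EuclideanSpace.proj (𝕜 := ℂ) (⟨i, j⟩ : (i : Fin k) × Fin (n i))).differentiable

theorem prodDomain_mono {s t : ∀ i, Set (EuclideanSpace ℂ (Fin (n i)))} (h : ∀ i, s i ⊆ t i) :
    prodDomain s ⊆ prodDomain t :=
  fun _ hz i => h i (hz i)

theorem ball_subset_prodDomain_ball (r : ℝ) :
    ball 0 r ⊆ prodDomain fun i => ball (0 : EuclideanSpace ℂ (Fin (n i))) r := fun z hz i =>
  mem_ball_zero_iff.2 ((norm_blockOf_le z i).trans_lt (mem_ball_zero_iff.1 hz))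

theorem prodDomain_ball_subset_ball {R : Fin k → ℝ} (hR : ∑ i, R i ^ 2 ≤ 1) :
    (prodDomain fun i => ball (0 : EuclideanSpace ℂ (Fin (n i))) (R i)) ⊆ ball 0 1 := by
  intro z hz
  rw [mem_ball_zero_iff, ← sq_lt_one_iff₀ (norm_nonneg z), norm_sq_eq_sum_norm_blockOf_sq]
  rcases (Finset.univ : Finset (Fin k)).eq_empty_or_nonempty with hk | hk
  · simp [hk]
  refine (Finset.sum_lt_sum_of_nonempty hk fun i _ => ?_).trans_le hR
  exact pow_lt_pow_left₀ (mem_ball_zero_iff.1 (hz i)) (norm_nonneg _) two_ne_zero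

def blockMap (g : ∀ i, EuclideanSpace ℂ (Fin (n i)) → EuclideanSpace ℂ (Fin (n i)))
    (z : EuclideanSpace ℂ ((i : Fin k) × Fin (n i))) :
    EuclideanSpace ℂ ((i : Fin k) × Fin (n i)) :=
  (blockEquiv n).symm (WithLp.toLp 2 fun i => g i (blockOf z i))

variable {g : ∀ i, EuclideanSpace ℂ (Fin (n i)) → EuclideanSpace ℂ (Fin (n i))}
  {Ω : ∀ i, Set (EuclideanSpace ℂ (Fin (n i)))}

theorem blockOf_blockMap (z : EuclideanSpace ℂ ((i : Fin k) × Fin (n i))) (i : Fin k) :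
    blockOf (blockMap g z) i = g i (blockOf z i) :=
  blockOf_blockEquiv_symm _ i

theorem differentiableOn_blockMap (hg : ∀ i, DifferentiableOn ℂ (g i) (Ω i)) :
    DifferentiableOn ℂ (blockMap g) (prodDomain Ω) :=
  (blockEquiv n).symm.toContinuousLinearEquiv.differentiable.comp_differentiableOn <|
    differentiableOn_piLp _ |>.2 fun i =>
      (hg i).comp (differentiable_blockOf i).differentiableOn fun _ hz => hz i

theorem injOn_blockMap (hg : ∀ i, InjOn (g i) (Ω i)) : InjOn (blockMap g) (prodDomain Ω) :=
  fun z hz w hw h => ext_blockOf fun i => hg i (hz i) (hw i) <| by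
    simpa only [blockOf_blockMap] using congrArg (blockOf · i) h

theorem image_blockMap : blockMap g '' prodDomain Ω = prodDomain fun i => g i '' Ω i := by
  ext w
  constructor
  · rintro ⟨z, hz, rfl⟩ i
    exact blockOf_blockMap z i ▸ mem_image_of_mem (g i) (hz i)
  · intro hw
    choose x hx hgx using hw
    refine ⟨(blockEquiv n).symm (WithLp.toLp 2 x), fun i => ?_, ext_blockOf fun i => ?_⟩
    · simpa only [blockOf_blockEquiv_symm] using hx i
    · rw [blockOf_blockMap, blockOf_blockEquiv_symm]
      exact hgx i

theorem IsSqueezingMap.blockMap {a : EuclideanSpace ℂ ((i : Fin k) × Fin (n i))} {r : ℝ}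
    {R : Fin k → ℝ} (hg : ∀ i, IsSqueezingMap (Ω i) (blockOf a i) (g i) r (R i))
    (hR : ∑ i, R i ^ 2 ≤ 1) : IsSqueezingMap (prodDomain Ω) a (blockMap g) r 1 where
  differentiableOn := differentiableOn_blockMap fun i => (hg i).differentiableOn
  injOn := injOn_blockMap fun i => (hg i).injOn
  image_subset_ball := image_blockMap.symm ▸
    (prodDomain_mono fun i => (hg i).image_subset_ball).trans (prodDomain_ball_subset_ball hR)
  map_center := ext_blockOf fun i => by
    rw [blockOf_blockMap, (hg i).map_center]
    rfl
  ball_subset_image := image_blockMap.symm ▸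
    (ball_subset_prodDomain_ball r).trans (prodDomain_mono fun i => (hg i).ball_subset_image)

end Blocks

section Product

variable {k : ℕ} {n : Fin k → ℕ} {Ω : ∀ i, Set (EuclideanSpace ℂ (Fin (n i)))}
  {a : EuclideanSpace ℂ ((i : Fin k) × Fin (n i))}

theorem mem_squeezingRadii_prodDomain {r : Fin k → ℝ}
    (hr : ∀ i, r i ∈ squeezingRadii (Ω i) (blockOf a i)) {c : ℝ} (hc : 0 < c)
    (hsum : ∑ i, (c / r i) ^ 2 ≤ 1) : c ∈ squeezingRadii (prodDomain Ω) a := by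
  choose hr_pos f hf using hr
  refine ⟨hc, blockMap fun i => ((c / r i : ℝ) : ℂ) • f i,
    IsSqueezingMap.blockMap (fun i => ?_) hsum⟩
  simpa [div_mul_cancel₀ c (hr_pos i).ne'] using (hf i).smul (div_pos hc (hr_pos i))

theorem inv_sqrt_sum_inv_sq_mem_squeezingRadii [Nonempty (Fin k)] {r : Fin k → ℝ}
    (hr : ∀ i, r i ∈ squeezingRadii (Ω i) (blockOf a i)) :
    (√(∑ i, (r i)⁻¹ ^ 2))⁻¹ ∈ squeezingRadii (prodDomain Ω) a := by
  have hpos : 0 < ∑ i, (r i)⁻¹ ^ 2 :=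
    Finset.sum_pos (fun i _ => pow_pos (inv_pos.2 (hr i).1) 2) Finset.univ_nonempty
  refine mem_squeezingRadii_prodDomain hr (by positivity) (le_of_eq ?_)
  simp_rw [div_eq_mul_inv, mul_pow, ← Finset.mul_sum]
  rw [inv_pow, Real.sq_sqrt hpos.le, inv_mul_cancel₀ hpos.ne']

end Product

theorem squeezingS_product_lower_bound_general (k : ℕ) (n : Fin k → ℕ)
    (Ω : ∀ i, Set (EuclideanSpace ℂ (Fin (n i)))) (hΩ : ∀ i, IsBoundedDomain (Ω i))
    (a : EuclideanSpace ℂ ((i : Fin k) × Fin (n i))) (ha : a ∈ prodDomain Ω) :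
    squeezingS (prodDomain Ω) a ≥
      (Real.sqrt (∑ i, ((squeezingS (Ω i) (blockOf a i))⁻¹) ^ 2))⁻¹ := by
  set T := ∑ i, ((squeezingS (Ω i) (blockOf a i))⁻¹) ^ 2
  rcases eq_or_ne T 0 with hT | hT
  · rw [hT, Real.sqrt_zero, _root_.inv_zero]
    exact squeezingS_nonneg _ _
  obtain ⟨i₀, -, hi₀⟩ := Finset.exists_ne_zero_of_sum_ne_zero hT
  have : Nonempty (Fin k) := ⟨i₀⟩
  have : Nonempty (Fin (n i₀)) :=
    not_isEmpty_iff.1 fun _ => by simp [squeezingS_of_isEmpty (ha i₀)] at hi₀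
  have : Nonempty ((i : Fin k) × Fin (n i)) := ⟨⟨i₀, Classical.arbitrary _⟩⟩
  choose u hu_mem hu_lim using fun i => exists_seq_mem_tendsto_inv_sSup
    (squeezingRadii_nonempty (hΩ i).1 (hΩ i).2.2 (ha i)) fun _ hr => hr.1
  have hlim : Tendsto (fun m => (√(∑ i, (u i m)⁻¹ ^ 2))⁻¹) atTop (𝓝 (√T)⁻¹) := by
    simp_rw [← squeezingS_eq_sSup_squeezingRadii] at hu_lim
    exact (tendsto_finsetSum _ fun i _ => (hu_lim i).pow 2).sqrt.inv₀
      (Real.sqrt_ne_zero'.2 ((Finset.sum_nonneg fun i _ => sq_nonneg _).lt_of_ne' hT))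
  rw [ge_iff_le, squeezingS_eq_sSup_squeezingRadii]
  exact le_of_tendsto' hlim fun m => le_csSup ⟨1, fun _ => le_one_of_mem_squeezingRadii⟩
    (inv_sqrt_sum_inv_sq_mem_squeezingRadii fun i => hu_mem i m)

/-- Lower bound for the ball-squeezing function of a product domain:
`S_Ω(a) ≥ (∑ᵢ S_{Ωᵢ}(aᵢ)⁻²)^{-1/2}`. -/
theorem squeezingS_product_lower_bound (k : ℕ) (hk : 0 < k) (n : Fin k → ℕ)
    (Ω : ∀ i, Set (EuclideanSpace ℂ (Fin (n i)))) (hΩ : ∀ i, IsBoundedDomain (Ω i))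
    (a : EuclideanSpace ℂ ((i : Fin k) × Fin (n i))) (ha : a ∈ prodDomain Ω) :
    squeezingS (prodDomain Ω) a ≥
      (Real.sqrt (∑ i, ((squeezingS (Ω i) (blockOf a i))⁻¹) ^ 2))⁻¹ :=
  squeezingS_product_lower_bound_general k n Ω hΩ a ha
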